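/- Let ψ₀(t) = 8t(t²−1)/(t²+1)³ and η₀(t) = log(1+t²). Then ∫₀^∞ ψ₀ dt = 0, ∫₀^∞ ψ₀ η₀ dt = 2, ∫₀^∞ ψ₀ η₀² dt = 6, ∫₀^∞ ψ₀ η₀³ dt = 21, and ∫₀^∞ ψ₀ η₀⁴ dt = 90. -/

import Mathlib

open MeasureTheory Real

noncomputable def psi0 (t : ℝ) : ℝ := 8 * t * (t ^ 2 - 1) / (t ^ 2 + 1) ^ 3
noncomputable def eta0 (t : ℝ) : ℝ := Real.log (1 + t ^ 2)

/-!
The substitution `s = log (1 + t²)` turns `ψ₀(t) dt` into `4 (e^{-s} - 2 e^{-2s}) ds` on `(0, ∞)`,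
so by the Gamma integral `∫₀^∞ s^k e^{-cs} ds = k! / c^{k+1}` the `k`-th moment
`∫₀^∞ ψ₀ η₀^k dt` equals `4 k! - 8 k! / 2^{k+1} = 4 k! (1 - 2^{-k})`.
-/

open Set
open scoped Nat

lemma integral_pow_mul_exp_neg_mul_Ioi (k : ℕ) {c : ℝ} (hc : 0 < c) :
    ∫ s in Ioi 0, s ^ k * exp (-(c * s)) = k ! / c ^ (k + 1) := by
  have h := integral_rpow_mul_exp_neg_mul_Ioi (a := (k : ℝ) + 1) (by positivity) hc
  rw [add_sub_cancel_right, Gamma_nat_eq_factorial, ← Nat.cast_add_one, rpow_natCast,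
    one_div_pow] at h
  rw [div_eq_inv_mul, ← one_div, ← h]
  refine setIntegral_congr_fun measurableSet_Ioi fun s _ => ?_
  simp only [rpow_natCast]

lemma integrableOn_pow_mul_exp_neg_mul_Ioi (k : ℕ) {c : ℝ} (hc : 0 < c) :
    IntegrableOn (fun s => s ^ k * exp (-(c * s))) (Ioi 0) :=
  Integrable.of_integral_ne_zero <| by
    rw [integral_pow_mul_exp_neg_mul_Ioi k hc]; positivity

lemma hasDerivAt_eta0 (t : ℝ) : HasDerivAt eta0 (2 * t / (1 + t ^ 2)) t := by
  show HasDerivAt (fun t => log (1 + t ^ 2)) _ t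
  simpa using ((hasDerivAt_pow 2 t).const_add 1).log (by positivity)

lemma strictMonoOn_eta0 : StrictMonoOn eta0 (Ici 0) := fun a ha b _ hab =>
  log_lt_log (by positivity) (by gcongr)

lemma eta0_image_Ioi : eta0 '' Ioi 0 = Ioi 0 := by
  ext s
  constructor
  · rintro ⟨t, ht, rfl⟩
    simpa [eta0] using strictMonoOn_eta0 self_mem_Ici (Ioi_subset_Ici_self ht) ht
  · intro hs
    have hpos : 0 < exp s - 1 := sub_pos.2 (one_lt_exp_iff.2 hs)
    refine ⟨√(exp s - 1), sqrt_pos.2 hpos, ?_⟩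
    rw [eta0, sq_sqrt hpos.le, add_sub_cancel, log_exp]

lemma psi0_mul_eta0_pow_eq_of_pos (k : ℕ) {t : ℝ} (ht : 0 < t) :
    psi0 t * eta0 t ^ k = |2 * t / (1 + t ^ 2)| *
      (4 * (eta0 t ^ k * exp (-(1 * eta0 t))) - 8 * (eta0 t ^ k * exp (-(2 * eta0 t)))) := by
  have hu : 0 < 1 + t ^ 2 := by positivity
  have h1 : exp (-(1 * eta0 t)) = (1 + t ^ 2)⁻¹ := by rw [one_mul, exp_neg, eta0, exp_log hu]
  have h2 : exp (-(2 * eta0 t)) = ((1 + t ^ 2) ^ 2)⁻¹ := by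
    rw [exp_neg, mul_comm, exp_mul, eta0, exp_log hu, rpow_two]
  rw [h1, h2, abs_of_pos (by positivity), psi0]
  field_simp
  ring

lemma integral_psi0_mul_eta0_pow (k : ℕ) :
    ∫ t in Ioi 0, psi0 t * eta0 t ^ k = 4 * k ! * (1 - 2⁻¹ ^ k) := by
  set g : ℝ → ℝ := fun s => 4 * (s ^ k * exp (-(1 * s))) - 8 * (s ^ k * exp (-(2 * s)))
  calc ∫ t in Ioi 0, psi0 t * eta0 t ^ k
      = ∫ t in Ioi 0, |2 * t / (1 + t ^ 2)| • g (eta0 t) :=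
        setIntegral_congr_fun measurableSet_Ioi fun _ ht => psi0_mul_eta0_pow_eq_of_pos k ht
    _ = ∫ s in eta0 '' Ioi 0, g s :=
        (integral_image_eq_integral_abs_deriv_smul measurableSet_Ioi
          (fun t _ => (hasDerivAt_eta0 t).hasDerivWithinAt)
          (strictMonoOn_eta0.mono Ioi_subset_Ici_self).injOn g).symm
    _ = 4 * (k ! / 1 ^ (k + 1)) - 8 * (k ! / 2 ^ (k + 1)) := by
        rw [eta0_image_Ioi, integral_sub, integral_const_mul, integral_const_mul,
          integral_pow_mul_exp_neg_mul_Ioi k one_pos, integral_pow_mul_exp_neg_mul_Ioi k two_pos]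
        · exact (integrableOn_pow_mul_exp_neg_mul_Ioi k one_pos).const_mul 4
        · exact (integrableOn_pow_mul_exp_neg_mul_Ioi k two_pos).const_mul 8
    _ = 4 * k ! * (1 - 2⁻¹ ^ k) := by
        rw [inv_pow, pow_succ]
        field_simp
        ring

theorem stmt7 :
    (∫ t in Set.Ioi (0 : ℝ), psi0 t) = 0 ∧
    (∫ t in Set.Ioi (0 : ℝ), psi0 t * eta0 t) = 2 ∧
    (∫ t in Set.Ioi (0 : ℝ), psi0 t * eta0 t ^ 2) = 6 ∧
    (∫ t in Set.Ioi (0 : ℝ), psi0 t * eta0 t ^ 3) = 21 ∧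
    (∫ t in Set.Ioi (0 : ℝ), psi0 t * eta0 t ^ 4) = 90 := by
  refine ⟨?_, ?_, ?_, ?_, ?_⟩
  · simpa using integral_psi0_mul_eta0_pow 0
  · convert integral_psi0_mul_eta0_pow 1 using 1 <;> norm_num
  all_goals rw [integral_psi0_mul_eta0_pow]; norm_num [Nat.factorial]
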